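/- arXiv:2304.10626 — 5 statements merged into one kernel-verified Lean document; each statement's English description precedes it below -/
import Mathlib

section
/- Let $A$, $B$, $C$ be smooth operator fields ((1,1)-tensor fields) on a smooth manifold such that $AC = CA$ and $BC = CB$ pointwise. Then for all vector fields $\xi, \eta$: $\langle AB, C\rangle(\xi,\eta) = \langle A, C\rangle(B\xi,\eta) + A\,\langle B, C\rangle(\xi,\eta)$, where for commuting operator fields $L, M$ the (1,2)-tensor $\langle L, M\rangle$ is defined by $\langle L, M\rangle(\xi,\eta) = M[L\xi,\eta] + L[\xi, M\eta] - [L\xi, M\eta] - LM[\xi,\eta]$. -/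
variable {E : Type*} [NormedAddCommGroup E] [NormedSpace ℝ E]

/-- The Lie bracket of vector fields on a vector space: `[ξ, η] = Dη(ξ) - Dξ(η)`. -/
noncomputable def lieBkt (ξ η : E → E) : E → E :=
  fun x => fderiv ℝ η x (ξ x) - fderiv ℝ ξ x (η x)

/-- An operator field applied to a vector field, `(Aξ)(x) = A(x)(ξ(x))`. -/
def opApp (A : E → E →L[ℝ] E) (ξ : E → E) : E → E := fun x => A x (ξ x)

/-- Nijenhuis's bilinear concomitant for (commuting) operator fields:
`⟨L,M⟩(ξ,η) = M[Lξ,η] + L[ξ,Mη] - [Lξ,Mη] - LM[ξ,η]`. -/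
noncomputable def nijBkt (L M : E → E →L[ℝ] E) (ξ η : E → E) : E → E :=
  fun x => M x (lieBkt (opApp L ξ) η x) + L x (lieBkt ξ (opApp M η) x)
    - lieBkt (opApp L ξ) (opApp M η) x - L x (M x (lieBkt ξ η x))

/-- `⟨AB, C⟩(ξ,η) = ⟨A, C⟩(Bξ, η) + A ⟨B, C⟩(ξ,η)` for operator fields `A, B` commuting
with `C`. -/
theorem nijBkt_comp_left (A B C : E → E →L[ℝ] E)
    (hA : ContDiff ℝ (⊤ : ℕ∞) A) (hB : ContDiff ℝ (⊤ : ℕ∞) B) (hC : ContDiff ℝ (⊤ : ℕ∞) C)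
    (hAC : ∀ x, (A x).comp (C x) = (C x).comp (A x))
    (hBC : ∀ x, (B x).comp (C x) = (C x).comp (B x))
    (ξ η : E → E) (hξ : ContDiff ℝ (⊤ : ℕ∞) ξ) (hη : ContDiff ℝ (⊤ : ℕ∞) η) :
    ∀ x, nijBkt (fun x => (A x).comp (B x)) C ξ η x =
      nijBkt A C (opApp B ξ) η x + A x (nijBkt B C ξ η x) := by
  intro x
  have hBξ : ContDiff ℝ (⊤ : ℕ∞) (fun y => B y (ξ y)) := hB.clm_apply hξ
  have hCη : ContDiff ℝ (⊤ : ℕ∞) (fun y => C y (η y)) := hC.clm_apply hη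
  have h1 : DifferentiableAt ℝ A x := (hA.differentiable (by simp)).differentiableAt
  have h2 : DifferentiableAt ℝ B x := (hB.differentiable (by simp)).differentiableAt
  have h3 : DifferentiableAt ℝ C x := (hC.differentiable (by simp)).differentiableAt
  have h4 : DifferentiableAt ℝ ξ x := (hξ.differentiable (by simp)).differentiableAt
  have h5 : DifferentiableAt ℝ η x := (hη.differentiable (by simp)).differentiableAt
  have h6 : DifferentiableAt ℝ (fun y => B y (ξ y)) x := (hBξ.differentiable (by simp)).differentiableAt
  have h7 : DifferentiableAt ℝ (fun y => C y (η y)) x := (hCη.differentiable (by simp)).differentiableAt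
  have h8 : DifferentiableAt ℝ (fun y => A y (B y (ξ y))) x :=
    ((hA.clm_apply hBξ).differentiable (by simp)).differentiableAt
  have e1 : opApp C η = fun y => C y (η y) := rfl
  have e2 : opApp B ξ = fun y => B y (ξ y) := rfl
  have e3 : opApp (fun x => (A x).comp (B x)) ξ = fun y => A y (B y (ξ y)) := rfl
  have e4 : opApp A (opApp B ξ) = fun y => A y (B y (ξ y)) := rfl
  have e5 : opApp A (fun y => B y (ξ y)) = fun y => A y (B y (ξ y)) := rfl
  simp only [nijBkt, lieBkt, e1, e2, e3, e4, e5, ContinuousLinearMap.comp_apply]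
  rw [fderiv_clm_apply h3 h5, fderiv_clm_apply h1 h6, fderiv_clm_apply h2 h4]
  simp only [ContinuousLinearMap.add_apply, ContinuousLinearMap.coe_comp', Function.comp_apply,
    ContinuousLinearMap.flip_apply, map_sub, map_add]
  have hac : ∀ v, (C x) ((A x) v) = (A x) ((C x) v) := fun v =>
    (congrArg (fun T : E →L[ℝ] E => T v) (hAC x)).symm
  have hbc : ∀ v, (C x) ((B x) v) = (B x) ((C x) v) := fun v =>
    (congrArg (fun T : E →L[ℝ] E => T v) (hBC x)).symm
  simp only [hac, hbc]
  abel
end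

section
/- Let $A$, $B$, $C$ be smooth operator fields on a smooth manifold with $AC = CA$ and $BC = CB$ pointwise. Then $\langle C, AB\rangle(\xi,\eta) = \langle C, A\rangle(\xi, B\eta) + A\,\langle C, B\rangle(\xi,\eta)$ for all vector fields $\xi,\eta$, where $\langle L,M\rangle(\xi,\eta) = M[L\xi,\eta] + L[\xi,M\eta] - [L\xi,M\eta] - LM[\xi,\eta]$. -/
variable {E : Type*} [NormedAddCommGroup E] [NormedSpace ℝ E]

/-- `⟨C, AB⟩(ξ,η) = ⟨C, A⟩(ξ, Bη) + A ⟨C, B⟩(ξ,η)` for operator fields `A, B` commuting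
with `C`. -/
theorem nijBkt_comp_right (A B C : E → E →L[ℝ] E)
    (hA : ContDiff ℝ (⊤ : ℕ∞) A) (hB : ContDiff ℝ (⊤ : ℕ∞) B) (hC : ContDiff ℝ (⊤ : ℕ∞) C)
    (hAC : ∀ x, (A x).comp (C x) = (C x).comp (A x))
    (hBC : ∀ x, (B x).comp (C x) = (C x).comp (B x))
    (ξ η : E → E) (hξ : ContDiff ℝ (⊤ : ℕ∞) ξ) (hη : ContDiff ℝ (⊤ : ℕ∞) η) :
    ∀ x, nijBkt C (fun x => (A x).comp (B x)) ξ η x =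
      nijBkt C A ξ (opApp B η) x + A x (nijBkt C B ξ η x) := by
  intro x
  have hAB : opApp (fun x => (A x).comp (B x)) η = opApp A (opApp B η) := rfl
  have h1 : ∀ w, A x (C x w) = C x (A x w) := fun w =>
    by simpa using (ContinuousLinearMap.ext_iff.mp (hAC x) w)
  simp only [nijBkt, hAB, ContinuousLinearMap.comp_apply, map_add, map_sub]
  rw [h1, h1]
  abel
end

section
/- Let $L$ be a smooth Nijenhuis operator field on a smooth manifold (its Nijenhuis torsion vanishes). Then for every natural number $k$, $\langle L, L^k\rangle = 0$, i.e., $L^k[L\xi,\eta] + L[\xi, L^k\eta] - [L\xi, L^k\eta] - L^{k+1}[\xi,\eta] = 0$ for all vector fields $\xi,\eta$. -/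
variable {E : Type*} [NormedAddCommGroup E] [NormedSpace ℝ E]

/-- If the Nijenhuis torsion of `L` vanishes, then `⟨L, L^k⟩ = 0` for every `k`. -/
theorem nijBkt_pow_vanish (L : E → E →L[ℝ] E) (hL : ContDiff ℝ (⊤ : ℕ∞) L)
    (htorsion : ∀ ξ η : E → E, ContDiff ℝ (⊤ : ℕ∞) ξ → ContDiff ℝ (⊤ : ℕ∞) η → ∀ x,
      L x (L x (lieBkt ξ η x)) - L x (lieBkt (opApp L ξ) η x)
        - L x (lieBkt ξ (opApp L η) x) + lieBkt (opApp L ξ) (opApp L η) x = 0) :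
    ∀ k : ℕ, ∀ ξ η : E → E, ContDiff ℝ (⊤ : ℕ∞) ξ → ContDiff ℝ (⊤ : ℕ∞) η → ∀ x,
      nijBkt L (fun x => (L x) ^ k) ξ η x = 0 := by
  intro k
  induction k with
  | zero =>
    intro ξ η hξ hη x
    have hop : opApp (fun _ : E => (1 : E →L[ℝ] E)) η = η := by
      funext y; simp [opApp]
    simp only [nijBkt, pow_zero, hop, ContinuousLinearMap.one_apply]
    abel
  | succ k ih =>
    intro ξ η hξ hη x
    set M : E → E →L[ℝ] E := fun x => (L x) ^ k with hM
    have hMsmooth : ContDiff ℝ (⊤ : ℕ∞) M := by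
      rw [hM]; clear ih hM M
      induction k with
      | zero => simpa using contDiff_const
      | succ n ihn => simp only [pow_succ]; exact ihn.mul hL
    have hζ : ContDiff ℝ (⊤ : ℕ∞) (opApp M η) := hMsmooth.clm_apply hη
    set ζ : E → E := opApp M η with hζdef
    -- ⟨L,L⟩(ξ, ζ) = 0 from the torsion hypothesis
    have h1 : nijBkt L L ξ ζ x = 0 := by
      have h := htorsion ξ ζ hξ hζ x
      unfold nijBkt
      calc L x (lieBkt (opApp L ξ) ζ x) + L x (lieBkt ξ (opApp L ζ) x)
            - lieBkt (opApp L ξ) (opApp L ζ) x - L x (L x (lieBkt ξ ζ x))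
          = -(L x (L x (lieBkt ξ ζ x)) - L x (lieBkt (opApp L ξ) ζ x)
            - L x (lieBkt ξ (opApp L ζ) x) + lieBkt (opApp L ξ) (opApp L ζ) x) := by abel
        _ = 0 := by rw [h, neg_zero]
    -- the function-level identity for the successor power
    have hopsucc : opApp (fun x => (L x) ^ (k + 1)) η = opApp L ζ := by
      funext y
      simp [opApp, hζdef, hM, pow_succ']
    have hpow : ∀ v : E, (L x) ^ (k + 1) = L x * M x := by
      intro v; rw [hM, pow_succ']
    -- key algebraic identity: ⟨L, L·M⟩(ξ,η) = ⟨L,L⟩(ξ, Mη) + L ⟨L,M⟩(ξ,η)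
    have key : nijBkt L (fun x => (L x) ^ (k + 1)) ξ η x
        = nijBkt L L ξ ζ x + L x (nijBkt L M ξ η x) := by
      unfold nijBkt
      rw [hopsucc]
      simp only [hpow 0, ContinuousLinearMap.mul_apply, map_add, map_sub]
      abel
    rw [key, h1, ih ξ η hξ hη x, map_zero, add_zero]
end

section
/- Let $L$ be a Nijenhuis operator field on a smooth manifold and $f$ a smooth function such that the 1-form $L^*\mathrm{d}f$ is closed. Then $(L^*)^k\,\mathrm{d}f$ is closed for every $k \geq 0$. -/
variable {E : Type*} [NormedAddCommGroup E] [NormedSpace ℝ E]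

/-- A 1-form `ω` (given as a field of covectors) is closed iff its derivative is symmetric. -/
def IsClosedOneForm (ω : E → E →L[ℝ] ℝ) : Prop :=
  ∀ x : E, ∀ v w : E, fderiv ℝ ω x v w = fderiv ℝ ω x w v

/-- If `L` is a Nijenhuis operator field and `L^* df` is closed, then `(L^*)^k df` is
closed for every `k ≥ 0`. -/
theorem pullback_powers_closed (L : E → E →L[ℝ] E) (f : E → ℝ)
    (hL : ContDiff ℝ (⊤ : ℕ∞) L) (hf : ContDiff ℝ (⊤ : ℕ∞) f)
    (htorsion : ∀ ξ η : E → E, ContDiff ℝ (⊤ : ℕ∞) ξ → ContDiff ℝ (⊤ : ℕ∞) η → ∀ x,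
      L x (L x (lieBkt ξ η x)) - L x (lieBkt (opApp L ξ) η x)
        - L x (lieBkt ξ (opApp L η) x) + lieBkt (opApp L ξ) (opApp L η) x = 0)
    (hclosed : IsClosedOneForm (fun x => (fderiv ℝ f x).comp (L x))) :
    ∀ k : ℕ, IsClosedOneForm (fun x => (fderiv ℝ f x).comp ((L x) ^ k)) := by
  have hdf : ContDiff ℝ (⊤ : ℕ∞) (fun x => fderiv ℝ f x) := hf.fderiv_right (by simp)
  have hLd : Differentiable ℝ L := hL.differentiable (by simp)
  have hdfd : Differentiable ℝ (fun x => fderiv ℝ f x) := hdf.differentiable (by simp)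
  have hpow : ∀ m : ℕ, ContDiff ℝ (⊤ : ℕ∞) (fun x => (L x) ^ m) := by
    intro m
    induction m with
    | zero => simpa using contDiff_const (c := (1 : E →L[ℝ] E))
    | succ m ih =>
      have h : (fun x => (L x) ^ (m + 1)) = fun x => ((L x) ^ m).comp (L x) := by
        funext x; rw [pow_succ]; rfl
      rw [h]; exact ih.clm_comp hL
  have hω : ∀ m : ℕ, ContDiff ℝ (⊤ : ℕ∞) (fun x => (fderiv ℝ f x).comp ((L x) ^ m)) :=
    fun m => hdf.clm_comp (hpow m)
  -- derivative of the field x ↦ L x v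
  have hA : ∀ (v : E) (x w : E), fderiv ℝ (fun y => L y v) x w = fderiv ℝ L x w v := by
    intro v x w
    rw [fderiv_clm_apply (hLd x) (differentiableAt_const v)]
    simp
  -- recursion for the derivative of ω_{m+1}
  have hrec : ∀ (m : ℕ) (x v u : E),
      fderiv ℝ (fun x => (fderiv ℝ f x).comp ((L x) ^ (m + 1))) x v u
        = fderiv ℝ (fun x => (fderiv ℝ f x).comp ((L x) ^ m)) x v (L x u)
          + (fderiv ℝ f x) (((L x) ^ m) ((fderiv ℝ L x v) u)) := by
    intro m x v u
    have h1 : (fun x => (fderiv ℝ f x).comp ((L x) ^ (m + 1)))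
        = fun x => ((fderiv ℝ f x).comp ((L x) ^ m)).comp (L x) := by
      funext x
      rw [pow_succ]
      ext u
      simp [ContinuousLinearMap.mul_apply]
    rw [h1, fderiv_clm_comp ((hω m).differentiable (by simp) x) (hLd x)]
    simp
    ring
  -- torsion identity evaluated on constant vector fields
  have hT : ∀ (x v w : E),
      L x (fderiv ℝ L x w v) - L x (fderiv ℝ L x v w)
        + (fderiv ℝ L x (L x v)) w - (fderiv ℝ L x (L x w)) v = 0 := by
    intro x v w
    have h := htorsion (fun _ => v) (fun _ => w) contDiff_const contDiff_const x
    have hov : (opApp L fun _ => v) = fun y => L y v := rfl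
    have how : (opApp L fun _ => w) = fun y => L y w := rfl
    have e0 : lieBkt (fun _ => v) (fun _ => w) x = 0 := by
      simp [lieBkt]
    have e1 : lieBkt (opApp L fun _ => v) (fun _ => w) x = -(fderiv ℝ L x w v) := by
      simp [lieBkt, hov, hA]
    have e2 : lieBkt (fun _ => v) (opApp L fun _ => w) x = fderiv ℝ L x v w := by
      simp [lieBkt, how, hA]
    have e3 : lieBkt (opApp L fun _ => v) (opApp L fun _ => w) x
        = (fderiv ℝ L x (L x v)) w - (fderiv ℝ L x (L x w)) v := by
      simp only [lieBkt, hov, how, hA]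
    rw [e0, e1, e2, e3] at h
    simp only [map_zero, map_neg, sub_neg_eq_add] at h
    abel_nf at h ⊢
    exact h
  -- main pairing identity: apply ω_k to the torsion
  have hE : ∀ (k : ℕ) (x v w : E),
      (fderiv ℝ f x) (((L x) ^ (k + 1)) (fderiv ℝ L x w v))
        - (fderiv ℝ f x) (((L x) ^ (k + 1)) (fderiv ℝ L x v w))
        + (fderiv ℝ f x) (((L x) ^ k) ((fderiv ℝ L x (L x v)) w))
        - (fderiv ℝ f x) (((L x) ^ k) ((fderiv ℝ L x (L x w)) v)) = 0 := by
    intro k x v w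
    have h := congrArg (fun z => (fderiv ℝ f x) (((L x) ^ k) z)) (hT x v w)
    simp only [map_sub, map_add, map_zero] at h
    have hp : ∀ u : E, ((L x) ^ k) (L x u) = ((L x) ^ (k + 1)) u := by
      intro u; rw [pow_succ, ContinuousLinearMap.mul_apply]
    rw [hp, hp] at h
    linear_combination h
  -- two-step induction
  suffices H : ∀ k : ℕ,
      IsClosedOneForm (fun x => (fderiv ℝ f x).comp ((L x) ^ k)) ∧
      IsClosedOneForm (fun x => (fderiv ℝ f x).comp ((L x) ^ (k + 1))) by
    exact fun k => (H k).1
  have base0 : IsClosedOneForm (fun x => (fderiv ℝ f x).comp ((L x) ^ 0)) := by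
    have h : (fun x => (fderiv ℝ f x).comp ((L x) ^ 0)) = fun x => fderiv ℝ f x := by
      funext x; ext u; simp
    rw [h]
    intro x v w
    exact second_derivative_symmetric (fun y => (hf.differentiable (by simp) y).hasFDerivAt)
      (hdfd x).hasFDerivAt v w
  have base1 : IsClosedOneForm (fun x => (fderiv ℝ f x).comp ((L x) ^ 1)) := by
    have h : (fun x => (fderiv ℝ f x).comp ((L x) ^ 1))
        = fun x => (fderiv ℝ f x).comp (L x) := by
      funext x; rw [pow_one]
    rw [h]; exact hclosed
  intro k
  induction k with
  | zero => exact ⟨base0, base1⟩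
  | succ k ih =>
    refine ⟨ih.2, ?_⟩
    intro x v w
    have h1 := hrec (k + 1) x v w
    have h2 := hrec (k + 1) x w v
    have h3 : fderiv ℝ (fun x => (fderiv ℝ f x).comp ((L x) ^ (k + 1))) x v (L x w)
        = fderiv ℝ (fun x => (fderiv ℝ f x).comp ((L x) ^ (k + 1))) x (L x w) v :=
      ih.2 x v (L x w)
    have h4 : fderiv ℝ (fun x => (fderiv ℝ f x).comp ((L x) ^ (k + 1))) x w (L x v)
        = fderiv ℝ (fun x => (fderiv ℝ f x).comp ((L x) ^ (k + 1))) x (L x v) w :=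
      ih.2 x w (L x v)
    have h5 := hrec k x (L x w) v
    have h6 := hrec k x (L x v) w
    have h7 : fderiv ℝ (fun x => (fderiv ℝ f x).comp ((L x) ^ k)) x (L x w) (L x v)
        = fderiv ℝ (fun x => (fderiv ℝ f x).comp ((L x) ^ k)) x (L x v) (L x w) :=
      ih.1 x (L x w) (L x v)
    have h8 := hE k x v w
    linarith [h1, h2, h3, h4, h5, h6, h7, h8]
end

section
/- Let $L$ be a $\mathrm{gl}$-regular operator on an $n$-dimensional vector space $V$ with $L^n = \sigma_1 L^{n-1} + \dots + \sigma_n\operatorname{Id}$, and let $g_1,\dots,g_n \in V^*$ be covectors satisfying $L^*g_i = \sigma_i g_1 + g_{i+1}$ for $i=1,\dots,n-1$ and $L^*g_n = \sigma_n g_1$. Define the bilinear map $T : V \times V \to V$ by $T(\xi,\eta) = g_1(\xi)L^{n-1}\eta + g_2(\xi)L^{n-2}\eta + \dots + g_n(\xi)\eta$. Then $T(L\xi,\eta) = T(\xi, L\eta)$ for all $\xi,\eta \in V$. -/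
/-- If `L` is gl-regular with `L^n = σ₁ L^{n-1} + ⋯ + σ_n Id` and the covectors `g_i`
satisfy `L^* g_i = σ_i g_1 + g_{i+1}` (`i = 1, …, n-1`) and `L^* g_n = σ_n g_1`, then the
bilinear map `T(ξ,η) = Σ_i g_i(ξ) L^{n-i} η` satisfies `T(Lξ,η) = T(ξ,Lη)`. -/
theorem tensorT_symmetric {V : Type*} [AddCommGroup V] [Module ℝ V]
    [FiniteDimensional ℝ V] {n : ℕ} (hdim : Module.finrank ℝ V = n)
    (L : Module.End ℝ V)
    (hreg : ∃ ζ : V, LinearIndependent ℝ (fun i : Fin n => (L ^ (i : ℕ)) ζ))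
    (σ : ℕ → ℝ)
    (hCH : L ^ n = ∑ i ∈ Finset.range n, σ (i + 1) • L ^ (n - (i + 1)))
    (g : ℕ → Module.Dual ℝ V)
    (hg : ∀ i, 1 ≤ i → i < n → L.dualMap (g i) = σ i • g 1 + g (i + 1))
    (hgn : L.dualMap (g n) = σ n • g 1) :
    ∀ ξ η : V,
      (∑ i ∈ Finset.range n, g (i + 1) (L ξ) • (L ^ (n - (i + 1))) η) =
        ∑ i ∈ Finset.range n, g (i + 1) ξ • (L ^ (n - (i + 1))) (L η) := by
  intro ξ η
  rcases n with _ | m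
  · simp
  · have hCHη : (L ^ (m + 1)) η = ∑ i ∈ Finset.range (m + 1), σ (i + 1) • (L ^ (m - i)) η := by
      have := congrArg (fun f : Module.End ℝ V => f η) hCH
      simpa [Nat.succ_sub_succ, LinearMap.sum_apply] using this
    have key : ∀ i < m, g (i + 1) (L ξ) = σ (i + 1) * g 1 ξ + g (i + 2) ξ := by
      intro i hi
      have h := hg (i + 1) (by omega) (by omega)
      have h2 := congrArg (fun f => f ξ) h
      simpa using h2
    have keyn : g (m + 1) (L ξ) = σ (m + 1) * g 1 ξ := by
      have h2 := congrArg (fun f => f ξ) hgn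
      simpa using h2
    have hR : ∀ i ∈ Finset.range (m + 1),
        g (i + 1) ξ • (L ^ (m + 1 - (i + 1))) (L η) = g (i + 1) ξ • (L ^ (m + 1 - i)) η := by
      intro i hi
      simp only [Finset.mem_range] at hi
      congr 1
      have he : m + 1 - i = (m + 1 - (i + 1)) + 1 := by omega
      rw [he, pow_succ, Module.End.mul_apply]
    have hL : ∀ i ∈ Finset.range m,
        g (i + 1) (L ξ) • (L ^ (m + 1 - (i + 1))) η
          = (σ (i + 1) * g 1 ξ) • (L ^ (m - i)) η + g (i + 2) ξ • (L ^ (m - i)) η := by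
      intro i hi
      simp only [Finset.mem_range] at hi
      rw [key i hi, add_smul, Nat.succ_sub_succ]
    rw [Finset.sum_congr rfl hR, Finset.sum_range_succ, Finset.sum_congr rfl hL, keyn,
      Finset.sum_range_succ' (fun i => g (i + 1) ξ • (L ^ (m + 1 - i)) η) m]
    simp only [Nat.succ_sub_succ, Nat.sub_self, Nat.add_sub_cancel_left, Nat.sub_zero]
    rw [hCHη, Finset.smul_sum, Finset.sum_add_distrib, Finset.sum_range_succ]
    simp only [smul_smul, Nat.sub_self, mul_comm]
    abel
end
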